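/- arXiv:1303.2003 — 2 statements merged into one kernel-verified Lean document; each statement's English description precedes it below -/
import Mathlib

section
/- Let n ≥ 1 and let a_i < b_i and c_i < d_i (i = 1,…,n) be real numbers. Let φ : [a_1,b_1]×⋯×[a_n,b_n] → [c_1,d_1]×⋯×[c_n,d_n] be a homeomorphism such that both φ and φ⁻¹ are order-preserving for the componentwise partial order of ℝ^n. Then for every x ∈ [a_1,b_1]×⋯×[a_n,b_n], the number of indices i with x_i = a_i equals the number of indices i with φ(x)_i = c_i, and the number of indices i with x_i = b_i equals the number of indices i with φ(x)_i = d_i. -/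
open Finset

/-- If the pointwise min of `y, z` is `p` and the pointwise max is `q`, then
each coordinate of `y` equals the corresponding coordinate of `p` or of `q`. -/
private lemma real_char {y z p q : ℝ} (h1 : min y z = p) (h2 : max y z = q) :
    y = p ∨ y = q := by
  rcases le_total y z with h | h
  · left; rw [min_eq_left h] at h1; exact h1
  · right; rw [max_eq_left h] at h2; exact h2

private lemma min_mem {n : ℕ} {a b : Fin n → ℝ} {y z : Fin n → ℝ}
    (hy : ∀ i, y i ∈ Set.Icc (a i) (b i)) (hz : ∀ i, z i ∈ Set.Icc (a i) (b i)) :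
    ∀ i, min (y i) (z i) ∈ Set.Icc (a i) (b i) :=
  fun i => ⟨le_min (hy i).1 (hz i).1, min_le_of_left_le (hy i).2⟩

private lemma max_mem {n : ℕ} {a b : Fin n → ℝ} {y z : Fin n → ℝ}
    (hy : ∀ i, y i ∈ Set.Icc (a i) (b i)) (hz : ∀ i, z i ∈ Set.Icc (a i) (b i)) :
    ∀ i, max (y i) (z i) ∈ Set.Icc (a i) (b i) :=
  fun i => ⟨le_max_of_le_left (hy i).1, max_le (hy i).2 (hz i).2⟩

section

variable {n : ℕ} {a b c d : Fin n → ℝ}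

/-- An order isomorphism between boxes preserves pointwise min. -/
private lemma map_min
    (f : ↥{x : Fin n → ℝ | ∀ i, x i ∈ Set.Icc (a i) (b i)} →
         ↥{y : Fin n → ℝ | ∀ i, y i ∈ Set.Icc (c i) (d i)})
    (g : ↥{y : Fin n → ℝ | ∀ i, y i ∈ Set.Icc (c i) (d i)} →
         ↥{x : Fin n → ℝ | ∀ i, x i ∈ Set.Icc (a i) (b i)})
    (hgf : ∀ x, g (f x) = x) (hfg : ∀ y, f (g y) = y)
    (hf : Monotone f) (hg : Monotone g)
    (y z : ↥{x : Fin n → ℝ | ∀ i, x i ∈ Set.Icc (a i) (b i)}) :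
    ((f ⟨fun i => min ((y : Fin n → ℝ) i) ((z : Fin n → ℝ) i), min_mem y.2 z.2⟩ :
        Fin n → ℝ)) = fun i => min ((f y : Fin n → ℝ) i) ((f z : Fin n → ℝ) i) := by
  set m : ↥{x : Fin n → ℝ | ∀ i, x i ∈ Set.Icc (a i) (b i)} :=
    ⟨fun i => min ((y : Fin n → ℝ) i) ((z : Fin n → ℝ) i), min_mem y.2 z.2⟩ with hm
  set m' : ↥{y : Fin n → ℝ | ∀ i, y i ∈ Set.Icc (c i) (d i)} :=
    ⟨fun i => min ((f y : Fin n → ℝ) i) ((f z : Fin n → ℝ) i),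
      min_mem (f y).2 (f z).2⟩ with hm'
  have hmy : m ≤ y := Subtype.coe_le_coe.1 fun i => min_le_left _ _
  have hmz : m ≤ z := Subtype.coe_le_coe.1 fun i => min_le_right _ _
  have h1 : ∀ i, (f m : Fin n → ℝ) i ≤ min ((f y : Fin n → ℝ) i) ((f z : Fin n → ℝ) i) :=
    fun i => le_min (Subtype.coe_le_coe.2 (hf hmy) i) (Subtype.coe_le_coe.2 (hf hmz) i)
  have h2 : m' ≤ f m := by
    have hy' : g m' ≤ y := by
      have := hg (show m' ≤ f y from Subtype.coe_le_coe.1 fun i => min_le_left _ _)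
      rwa [hgf] at this
    have hz' : g m' ≤ z := by
      have := hg (show m' ≤ f z from Subtype.coe_le_coe.1 fun i => min_le_right _ _)
      rwa [hgf] at this
    have hgm : g m' ≤ m := Subtype.coe_le_coe.1 fun i =>
      le_min (Subtype.coe_le_coe.2 hy' i) (Subtype.coe_le_coe.2 hz' i)
    have := hf hgm
    rwa [hfg] at this
  funext i
  exact le_antisymm (h1 i) (Subtype.coe_le_coe.2 h2 i)

/-- An order isomorphism between boxes preserves pointwise max. -/
private lemma map_max
    (f : ↥{x : Fin n → ℝ | ∀ i, x i ∈ Set.Icc (a i) (b i)} →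
         ↥{y : Fin n → ℝ | ∀ i, y i ∈ Set.Icc (c i) (d i)})
    (g : ↥{y : Fin n → ℝ | ∀ i, y i ∈ Set.Icc (c i) (d i)} →
         ↥{x : Fin n → ℝ | ∀ i, x i ∈ Set.Icc (a i) (b i)})
    (hgf : ∀ x, g (f x) = x) (hfg : ∀ y, f (g y) = y)
    (hf : Monotone f) (hg : Monotone g)
    (y z : ↥{x : Fin n → ℝ | ∀ i, x i ∈ Set.Icc (a i) (b i)}) :
    ((f ⟨fun i => max ((y : Fin n → ℝ) i) ((z : Fin n → ℝ) i), max_mem y.2 z.2⟩ :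
        Fin n → ℝ)) = fun i => max ((f y : Fin n → ℝ) i) ((f z : Fin n → ℝ) i) := by
  set m : ↥{x : Fin n → ℝ | ∀ i, x i ∈ Set.Icc (a i) (b i)} :=
    ⟨fun i => max ((y : Fin n → ℝ) i) ((z : Fin n → ℝ) i), max_mem y.2 z.2⟩ with hm
  set m' : ↥{y : Fin n → ℝ | ∀ i, y i ∈ Set.Icc (c i) (d i)} :=
    ⟨fun i => max ((f y : Fin n → ℝ) i) ((f z : Fin n → ℝ) i),
      max_mem (f y).2 (f z).2⟩ with hm'
  have hmy : y ≤ m := Subtype.coe_le_coe.1 fun i => le_max_left _ _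
  have hmz : z ≤ m := Subtype.coe_le_coe.1 fun i => le_max_right _ _
  have h1 : ∀ i, max ((f y : Fin n → ℝ) i) ((f z : Fin n → ℝ) i) ≤ (f m : Fin n → ℝ) i :=
    fun i => max_le (Subtype.coe_le_coe.2 (hf hmy) i) (Subtype.coe_le_coe.2 (hf hmz) i)
  have h2 : f m ≤ m' := by
    have hy' : y ≤ g m' := by
      have := hg (show f y ≤ m' from Subtype.coe_le_coe.1 fun i => le_max_left _ _)
      rwa [hgf] at this
    have hz' : z ≤ g m' := by
      have := hg (show f z ≤ m' from Subtype.coe_le_coe.1 fun i => le_max_right _ _)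
      rwa [hgf] at this
    have hgm : m ≤ g m' := Subtype.coe_le_coe.1 fun i =>
      max_le (Subtype.coe_le_coe.2 hy' i) (Subtype.coe_le_coe.2 hz' i)
    have := hf hgm
    rwa [hfg] at this
  funext i
  exact le_antisymm (Subtype.coe_le_coe.2 h2 i) (h1 i)

/-- The key counting lemma: the number of coordinates where `p` differs from `q`
can only increase under an order isomorphism of boxes. -/
private lemma key (hcd : ∀ i, c i ≤ d i)
    (f : ↥{x : Fin n → ℝ | ∀ i, x i ∈ Set.Icc (a i) (b i)} →
         ↥{y : Fin n → ℝ | ∀ i, y i ∈ Set.Icc (c i) (d i)})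
    (g : ↥{y : Fin n → ℝ | ∀ i, y i ∈ Set.Icc (c i) (d i)} →
         ↥{x : Fin n → ℝ | ∀ i, x i ∈ Set.Icc (a i) (b i)})
    (hgf : ∀ x, g (f x) = x) (hfg : ∀ y, f (g y) = y)
    (hf : Monotone f) (hg : Monotone g)
    (p q : ↥{x : Fin n → ℝ | ∀ i, x i ∈ Set.Icc (a i) (b i)})
    (hpq : ∀ i, (p : Fin n → ℝ) i ≤ (q : Fin n → ℝ) i) :
    (univ.filter fun i => (p : Fin n → ℝ) i ≠ (q : Fin n → ℝ) i).card ≤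
      (univ.filter fun i => (f p : Fin n → ℝ) i ≠ (f q : Fin n → ℝ) i).card := by
  classical
  -- complemented elements from boolean functions
  let Y : ({i : Fin n // (p : Fin n → ℝ) i ≠ (q : Fin n → ℝ) i} → Bool) →
      ↥{x : Fin n → ℝ | ∀ i, x i ∈ Set.Icc (a i) (b i)} := fun f0 =>
    ⟨fun i => if h : (p : Fin n → ℝ) i ≠ (q : Fin n → ℝ) i then
        (if f0 ⟨i, h⟩ then (q : Fin n → ℝ) i else (p : Fin n → ℝ) i)
      else (p : Fin n → ℝ) i,
     fun i => by dsimp only; split_ifs <;> first | exact p.2 i | exact q.2 i⟩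
  let Z : ({i : Fin n // (p : Fin n → ℝ) i ≠ (q : Fin n → ℝ) i} → Bool) →
      ↥{x : Fin n → ℝ | ∀ i, x i ∈ Set.Icc (a i) (b i)} := fun f0 =>
    ⟨fun i => if h : (p : Fin n → ℝ) i ≠ (q : Fin n → ℝ) i then
        (if f0 ⟨i, h⟩ then (p : Fin n → ℝ) i else (q : Fin n → ℝ) i)
      else (p : Fin n → ℝ) i,
     fun i => by dsimp only; split_ifs <;> first | exact p.2 i | exact q.2 i⟩
  have hYZmin : ∀ f0 i,
      min ((Y f0 : Fin n → ℝ) i) ((Z f0 : Fin n → ℝ) i) = (p : Fin n → ℝ) i := by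
    intro f0 i
    simp only [Y, Z]
    split_ifs with h h2
    · exact min_eq_right (hpq i)
    · exact min_eq_left (hpq i)
    · exact min_self _
  have hYZmax : ∀ f0 i,
      max ((Y f0 : Fin n → ℝ) i) ((Z f0 : Fin n → ℝ) i) = (q : Fin n → ℝ) i := by
    intro f0 i
    simp only [Y, Z]
    split_ifs with h h2
    · exact max_eq_left (hpq i)
    · exact max_eq_right (hpq i)
    · rw [max_self]
      exact not_not.1 h
  -- the min of f (Y f0) and f (Z f0) is f p; sim. for max
  have hminFP : ∀ f0 i,
      min ((f (Y f0) : Fin n → ℝ) i) ((f (Z f0) : Fin n → ℝ) i) = (f p : Fin n → ℝ) i := by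
    intro f0 i
    have hYZp : (⟨fun i => min ((Y f0 : Fin n → ℝ) i) ((Z f0 : Fin n → ℝ) i),
        min_mem (Y f0).2 (Z f0).2⟩ :
        ↥{x : Fin n → ℝ | ∀ i, x i ∈ Set.Icc (a i) (b i)}) = p :=
      Subtype.ext (funext (hYZmin f0))
    have h := map_min f g hgf hfg hf hg (Y f0) (Z f0)
    rw [hYZp] at h
    exact (congrFun h i).symm
  have hmaxFQ : ∀ f0 i,
      max ((f (Y f0) : Fin n → ℝ) i) ((f (Z f0) : Fin n → ℝ) i) = (f q : Fin n → ℝ) i := by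
    intro f0 i
    have hYZq : (⟨fun i => max ((Y f0 : Fin n → ℝ) i) ((Z f0 : Fin n → ℝ) i),
        max_mem (Y f0).2 (Z f0).2⟩ :
        ↥{x : Fin n → ℝ | ∀ i, x i ∈ Set.Icc (a i) (b i)}) = q :=
      Subtype.ext (funext (hYZmax f0))
    have h := map_max f g hgf hfg hf hg (Y f0) (Z f0)
    rw [hYZq] at h
    exact (congrFun h i).symm
  have hchar : ∀ f0 j,
      (f (Y f0) : Fin n → ℝ) j = (f p : Fin n → ℝ) j ∨
      (f (Y f0) : Fin n → ℝ) j = (f q : Fin n → ℝ) j :=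
    fun f0 j => real_char (hminFP f0 j) (hmaxFQ f0 j)
  -- the injection
  have hinj : Function.Injective
      (fun f0 : ({i : Fin n // (p : Fin n → ℝ) i ≠ (q : Fin n → ℝ) i} → Bool) =>
        fun j : {j : Fin n // (f p : Fin n → ℝ) j ≠ (f q : Fin n → ℝ) j} =>
          decide ((f (Y f0) : Fin n → ℝ) j.1 = (f q : Fin n → ℝ) j.1)) := by
    intro f0 f1 h
    have hYeq : f (Y f0) = f (Y f1) := by
      apply Subtype.ext; funext j
      by_cases hj : (f p : Fin n → ℝ) j ≠ (f q : Fin n → ℝ) j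
      · have hd := congrFun h ⟨j, hj⟩
        simp only [decide_eq_decide] at hd
        rcases hchar f0 j with h0 | h0 <;> rcases hchar f1 j with h1' | h1'
        · rw [h0, h1']
        · exfalso; rw [h0, h1'] at hd; exact hj (hd.2 rfl)
        · exfalso; rw [h0, h1'] at hd; exact hj (hd.1 rfl)
        · rw [h0, h1']
      · push_neg at hj
        rcases hchar f0 j with h0 | h0 <;> rcases hchar f1 j with h1' | h1' <;>
          rw [h0, h1'] <;> simp [hj]
    have hY : Y f0 = Y f1 := by
      have h' := congrArg g hYeq
      rwa [hgf, hgf] at h'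
    funext j
    obtain ⟨i, hi⟩ := j
    have hcoord := congrFun (congrArg Subtype.val hY) i
    simp only [Y, dif_pos hi] at hcoord
    cases hf0 : f0 ⟨i, hi⟩ <;> cases hf1 : f1 ⟨i, hi⟩ <;>
      rw [hf0, hf1] at hcoord <;> simp [hf0, hf1] at hcoord ⊢ <;>
      first
        | exact absurd hcoord hi
        | exact absurd hcoord (Ne.symm hi)
  have hcard := Fintype.card_le_of_injective _ hinj
  rw [Fintype.card_fun, Fintype.card_fun, Fintype.card_bool,
    Fintype.card_subtype, Fintype.card_subtype] at hcard
  exact (Nat.pow_le_pow_iff_right one_lt_two).1 hcard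

/-- An order isomorphism of boxes sends the bottom corner to the bottom corner. -/
private lemma map_bot (hab : ∀ i, a i ≤ b i) (hcd : ∀ i, c i ≤ d i)
    (f : ↥{x : Fin n → ℝ | ∀ i, x i ∈ Set.Icc (a i) (b i)} →
         ↥{y : Fin n → ℝ | ∀ i, y i ∈ Set.Icc (c i) (d i)})
    (g : ↥{y : Fin n → ℝ | ∀ i, y i ∈ Set.Icc (c i) (d i)} →
         ↥{x : Fin n → ℝ | ∀ i, x i ∈ Set.Icc (a i) (b i)})
    (hgf : ∀ x, g (f x) = x) (hfg : ∀ y, f (g y) = y)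
    (hf : Monotone f) (hg : Monotone g) :
    f ⟨a, fun i => ⟨le_refl _, hab i⟩⟩ = ⟨c, fun i => ⟨le_refl _, hcd i⟩⟩ := by
  apply le_antisymm
  · have h1 : (⟨a, fun i => ⟨le_refl _, hab i⟩⟩ :
        ↥{x : Fin n → ℝ | ∀ i, x i ∈ Set.Icc (a i) (b i)}) ≤
        g ⟨c, fun i => ⟨le_refl _, hcd i⟩⟩ :=
      Subtype.coe_le_coe.1 fun i => ((g ⟨c, fun i => ⟨le_refl _, hcd i⟩⟩).2 i).1
    have := hf h1
    rwa [hfg] at this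
  · exact Subtype.coe_le_coe.1 fun i => ((f ⟨a, fun i => ⟨le_refl _, hab i⟩⟩).2 i).1

/-- An order isomorphism of boxes sends the top corner to the top corner. -/
private lemma map_top (hab : ∀ i, a i ≤ b i) (hcd : ∀ i, c i ≤ d i)
    (f : ↥{x : Fin n → ℝ | ∀ i, x i ∈ Set.Icc (a i) (b i)} →
         ↥{y : Fin n → ℝ | ∀ i, y i ∈ Set.Icc (c i) (d i)})
    (g : ↥{y : Fin n → ℝ | ∀ i, y i ∈ Set.Icc (c i) (d i)} →
         ↥{x : Fin n → ℝ | ∀ i, x i ∈ Set.Icc (a i) (b i)})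
    (hgf : ∀ x, g (f x) = x) (hfg : ∀ y, f (g y) = y)
    (hf : Monotone f) (hg : Monotone g) :
    f ⟨b, fun i => ⟨hab i, le_refl _⟩⟩ = ⟨d, fun i => ⟨hcd i, le_refl _⟩⟩ := by
  apply le_antisymm
  · exact Subtype.coe_le_coe.1 fun i => ((f ⟨b, fun i => ⟨hab i, le_refl _⟩⟩).2 i).2
  · have h1 : g ⟨d, fun i => ⟨hcd i, le_refl _⟩⟩ ≤
        (⟨b, fun i => ⟨hab i, le_refl _⟩⟩ :
          ↥{x : Fin n → ℝ | ∀ i, x i ∈ Set.Icc (a i) (b i)}) :=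
      Subtype.coe_le_coe.1 fun i => ((g ⟨d, fun i => ⟨hcd i, le_refl _⟩⟩).2 i).2
    have := hf h1
    rwa [hfg] at this

end

open Classical in
/-- If `φ` is a dihomeomorphism between the hyperrectangles
`[a 0, b 0] × ⋯ × [a (n-1), b (n-1)]` and `[c 0, d 0] × ⋯ × [c (n-1), d (n-1)]`
(a homeomorphism such that `φ` and `φ⁻¹` preserve the componentwise partial order of
`ℝⁿ`), then every point `x` has the same number of minimal coordinates as `φ x`, and
the same number of maximal coordinates as `φ x`. -/
theorem minmax_coord_dihomeo {n : ℕ} (hn : 1 ≤ n) (a b c d : Fin n → ℝ)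
    (hab : ∀ i, a i < b i) (hcd : ∀ i, c i < d i)
    (φ : ↥{x : Fin n → ℝ | ∀ i, x i ∈ Set.Icc (a i) (b i)} ≃ₜ
         ↥{y : Fin n → ℝ | ∀ i, y i ∈ Set.Icc (c i) (d i)})
    (hmono : Monotone φ) (hmono' : Monotone φ.symm)
    (x : ↥{x : Fin n → ℝ | ∀ i, x i ∈ Set.Icc (a i) (b i)}) :
    (Finset.univ.filter fun i => (x : Fin n → ℝ) i = a i).card =
      (Finset.univ.filter fun i => (φ x : Fin n → ℝ) i = c i).card ∧
    (Finset.univ.filter fun i => (x : Fin n → ℝ) i = b i).card =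
      (Finset.univ.filter fun i => (φ x : Fin n → ℝ) i = d i).card := by
  classical
  have hab' : ∀ i, a i ≤ b i := fun i => (hab i).le
  have hcd' : ∀ i, c i ≤ d i := fun i => (hcd i).le
  set pa : ↥{x : Fin n → ℝ | ∀ i, x i ∈ Set.Icc (a i) (b i)} :=
    ⟨a, fun i => ⟨le_refl _, hab' i⟩⟩ with hpa
  set pb : ↥{x : Fin n → ℝ | ∀ i, x i ∈ Set.Icc (a i) (b i)} :=
    ⟨b, fun i => ⟨hab' i, le_refl _⟩⟩ with hpb
  set pc : ↥{y : Fin n → ℝ | ∀ i, y i ∈ Set.Icc (c i) (d i)} :=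
    ⟨c, fun i => ⟨le_refl _, hcd' i⟩⟩ with hpc
  set pd : ↥{y : Fin n → ℝ | ∀ i, y i ∈ Set.Icc (c i) (d i)} :=
    ⟨d, fun i => ⟨hcd' i, le_refl _⟩⟩ with hpd
  have hgf : ∀ u, φ.symm (φ u) = u := φ.symm_apply_apply
  have hfg : ∀ u, φ (φ.symm u) = u := φ.apply_symm_apply
  have hfa : φ pa = pc := map_bot hab' hcd' φ φ.symm hgf hfg hmono hmono'
  have hfb : φ pb = pd := map_top hab' hcd' φ φ.symm hgf hfg hmono hmono'
  -- counting lemma in both directions, for the pair (pa, x)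
  have hax : ∀ i, (pa : Fin n → ℝ) i ≤ (x : Fin n → ℝ) i := fun i => (x.2 i).1
  have hxb : ∀ i, (x : Fin n → ℝ) i ≤ (pb : Fin n → ℝ) i := fun i => (x.2 i).2
  have k1 := key hcd' φ φ.symm hgf hfg hmono hmono' pa x hax
  have k2 := key hab' φ.symm φ hfg hgf hmono' hmono (φ pa) (φ x)
    (fun i => Subtype.coe_le_coe.2 (hmono (Subtype.coe_le_coe.1 hax)) i)
  rw [hgf, hgf] at k2
  have k3 := key hcd' φ φ.symm hgf hfg hmono hmono' x pb hxb
  have k4 := key hab' φ.symm φ hfg hgf hmono' hmono (φ x) (φ pb)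
    (fun i => Subtype.coe_le_coe.2 (hmono (Subtype.coe_le_coe.1 hxb)) i)
  rw [hgf, hgf] at k4
  have e1 : (Finset.univ.filter fun i => (pa : Fin n → ℝ) i ≠ (x : Fin n → ℝ) i).card =
      (Finset.univ.filter fun i => (φ pa : Fin n → ℝ) i ≠ (φ x : Fin n → ℝ) i).card :=
    le_antisymm k1 k2
  have e2 : (Finset.univ.filter fun i => (x : Fin n → ℝ) i ≠ (pb : Fin n → ℝ) i).card =
      (Finset.univ.filter fun i => (φ x : Fin n → ℝ) i ≠ (φ pb : Fin n → ℝ) i).card :=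
    le_antisymm k3 k4
  rw [hfa] at e1
  rw [hfb] at e2
  -- turn ≠-counts into =-counts
  have compl : ∀ (u v : Fin n → ℝ),
      (Finset.univ.filter fun i => u i = v i).card +
        (Finset.univ.filter fun i => u i ≠ v i).card = n := by
    intro u v
    rw [Finset.card_filter_add_card_filter_not, Finset.card_univ, Fintype.card_fin]
  have flip1 : (Finset.univ.filter fun i => (pa : Fin n → ℝ) i ≠ (x : Fin n → ℝ) i) =
      (Finset.univ.filter fun i => (x : Fin n → ℝ) i ≠ a i) := by
    apply Finset.filter_congr; intro i _; simp [hpa, ne_comm]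
  have flip2 : (Finset.univ.filter fun i => (pc : Fin n → ℝ) i ≠ (φ x : Fin n → ℝ) i) =
      (Finset.univ.filter fun i => (φ x : Fin n → ℝ) i ≠ c i) := by
    apply Finset.filter_congr; intro i _; simp [hpc, ne_comm]
  rw [flip1, flip2] at e1
  have c1 := compl (x : Fin n → ℝ) a
  have c2 := compl (φ x : Fin n → ℝ) c
  have c3 := compl (x : Fin n → ℝ) b
  have c4 := compl (φ x : Fin n → ℝ) d
  have e2' : (Finset.univ.filter fun i => (x : Fin n → ℝ) i ≠ b i).card =
      (Finset.univ.filter fun i => (φ x : Fin n → ℝ) i ≠ d i).card := by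
    simpa [hpb, hpd] using e2
  have e1' : (Finset.univ.filter fun i => (x : Fin n → ℝ) i ≠ a i).card =
      (Finset.univ.filter fun i => (φ x : Fin n → ℝ) i ≠ c i).card := e1
  constructor
  · omega
  · omega
end

section
/- Let n ≥ 1 and let a_i < b_i and c_i < d_i (i = 1,…,n) be real numbers. Let φ : [a_1,b_1]×⋯×[a_n,b_n] → [c_1,d_1]×⋯×[c_n,d_n] be a homeomorphism such that both φ and φ⁻¹ are order-preserving for the componentwise partial order of ℝ^n. Then for every index k ∈ {1,…,n} there exists an index l ∈ {1,…,n} such that φ maps the face [a_1,b_1]×⋯×[a_{k−1},b_{k−1}]×{a_k}×[a_{k+1},b_{k+1}]×⋯×[a_n,b_n] onto [c_1,d_1]×⋯×[c_{l−1},d_{l−1}]×{c_l}×[c_{l+1},d_{l+1}]×⋯×[c_n,d_n] and maps the face [a_1,b_1]×⋯×[a_{k−1},b_{k−1}]×{b_k}×[a_{k+1},b_{k+1}]×⋯×[a_n,b_n] onto [c_1,d_1]×⋯×[c_{l−1},d_{l−1}]×{d_l}×[c_{l+1},d_{l+1}]×⋯×[c_n,d_n]. -/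
open Function

namespace FaceAux

variable {n : ℕ}

abbrev cube (a b : Fin n → ℝ) : Set (Fin n → ℝ) := {x : Fin n → ℝ | ∀ i, x i ∈ Set.Icc (a i) (b i)}

lemma le_def {a b : Fin n → ℝ} {x y : ↥(cube a b)} :
    x ≤ y ↔ ∀ i, (x : Fin n → ℝ) i ≤ (y : Fin n → ℝ) i := Iff.rfl

lemma mem_low {a b : Fin n → ℝ} (hab : ∀ i, a i < b i) : a ∈ cube a b :=
  fun i => ⟨le_rfl, (hab i).le⟩

lemma mem_high {a b : Fin n → ℝ} (hab : ∀ i, a i < b i) : b ∈ cube a b :=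
  fun i => ⟨(hab i).le, le_rfl⟩

lemma mem_upd {a b : Fin n → ℝ} (hab : ∀ i, a i < b i) (k : Fin n) {t : ℝ}
    (ht : t ∈ Set.Icc (a k) (b k)) : Function.update a k t ∈ cube a b := by
  intro i
  rcases eq_or_ne i k with rfl | h
  · simpa using ht
  · simp [Function.update_of_ne h, (hab i).le]

lemma mem_upd' {a b : Fin n → ℝ} (hab : ∀ i, a i < b i) (k : Fin n) {t : ℝ}
    (ht : t ∈ Set.Icc (a k) (b k)) : Function.update b k t ∈ cube a b := by
  intro i
  rcases eq_or_ne i k with rfl | h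
  · simpa using ht
  · simp [Function.update_of_ne h, (hab i).le]

section

variable {a b c d : Fin n → ℝ} (hab : ∀ i, a i < b i) (hcd : ∀ i, c i < d i)
  (e : ↥(cube a b) ≃ ↥(cube c d)) (hm : Monotone e) (hm' : Monotone e.symm)

include hab hcd hm hm'

lemma map_bot : (e ⟨a, mem_low hab⟩ : Fin n → ℝ) = c := by
  have h1 : (⟨a, mem_low hab⟩ : ↥(cube a b)) ≤ e.symm ⟨c, mem_low hcd⟩ :=
    fun i => ((e.symm ⟨c, mem_low hcd⟩).2 i).1
  have h2 := hm h1
  rw [e.apply_symm_apply] at h2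
  exact funext fun i => le_antisymm (h2 i) (((e _).2 i).1)

lemma map_top : (e ⟨b, mem_high hab⟩ : Fin n → ℝ) = d := by
  have h1 : e.symm ⟨d, mem_high hcd⟩ ≤ (⟨b, mem_high hab⟩ : ↥(cube a b)) :=
    fun i => ((e.symm ⟨d, mem_high hcd⟩).2 i).2
  have h2 := hm h1
  rw [e.apply_symm_apply] at h2
  exact funext fun i => le_antisymm (((e _).2 i).2) (h2 i)

/-- image of an edge point at the bottom corner lies on a single edge -/
lemma edge_low (k : Fin n) (W : ↥(cube a b)) (hWk : a k < (W : Fin n → ℝ) k)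
    (hW : ∀ j ≠ k, (W : Fin n → ℝ) j = a j) :
    ∃ l, c l < (e W : Fin n → ℝ) l ∧ ∀ j ≠ l, (e W : Fin n → ℝ) j = c j := by
  have hne : (e W : Fin n → ℝ) ≠ c := by
    intro h
    have : e W = e ⟨a, mem_low hab⟩ := by
      rw [Subtype.ext_iff, h, map_bot hab hcd e hm hm']
    have := e.injective this
    rw [Subtype.ext_iff] at this
    exact absurd (congrFun this k) (ne_of_gt hWk)
  have hge : ∀ i, c i ≤ (e W : Fin n → ℝ) i := fun i => ((e W).2 i).1
  obtain ⟨l, hl⟩ := Function.ne_iff.mp hne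
  have hlgt : c l < (e W : Fin n → ℝ) l := lt_of_le_of_ne (hge l) (Ne.symm hl)
  refine ⟨l, hlgt, fun j hj => ?_⟩
  by_contra hjne
  have hjgt : c j < (e W : Fin n → ℝ) j := lt_of_le_of_ne (hge j) (Ne.symm hjne)
  -- two incomparable points below e W
  set y1 : Fin n → ℝ := Function.update c l ((e W : Fin n → ℝ) l) with hy1
  set y2 : Fin n → ℝ := Function.update c j ((e W : Fin n → ℝ) j) with hy2
  have hy1m : y1 ∈ cube c d := mem_upd hcd l ⟨(hge l), ((e W).2 l).2⟩
  have hy2m : y2 ∈ cube c d := mem_upd hcd j ⟨(hge j), ((e W).2 j).2⟩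
  have hy1le : (⟨y1, hy1m⟩ : ↥(cube c d)) ≤ e W := by
    intro i
    rcases eq_or_ne i l with rfl | h
    · simp [hy1]
    · simpa [hy1, Function.update_of_ne h] using hge i
  have hy2le : (⟨y2, hy2m⟩ : ↥(cube c d)) ≤ e W := by
    intro i
    rcases eq_or_ne i j with rfl | h
    · simp [hy2]
    · simpa [hy2, Function.update_of_ne h] using hge i
  set x1 := e.symm ⟨y1, hy1m⟩ with hx1
  set x2 := e.symm ⟨y2, hy2m⟩ with hx2
  have hx1le : x1 ≤ W := by have := hm' hy1le; rwa [e.symm_apply_apply] at this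
  have hx2le : x2 ≤ W := by have := hm' hy2le; rwa [e.symm_apply_apply] at this
  have hx1c : ∀ i ≠ k, (x1 : Fin n → ℝ) i = a i :=
    fun i hi => le_antisymm (by simpa [hW i hi] using hx1le i) ((x1.2 i).1)
  have hx2c : ∀ i ≠ k, (x2 : Fin n → ℝ) i = a i :=
    fun i hi => le_antisymm (by simpa [hW i hi] using hx2le i) ((x2.2 i).1)
  have hcomp : x1 ≤ x2 ∨ x2 ≤ x1 := by
    rcases le_total ((x1 : Fin n → ℝ) k) ((x2 : Fin n → ℝ) k) with h | h
    · left; intro i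
      rcases eq_or_ne i k with rfl | hi
      · exact h
      · rw [hx1c i hi, hx2c i hi]
    · right; intro i
      rcases eq_or_ne i k with rfl | hi
      · exact h
      · rw [hx1c i hi, hx2c i hi]
  rcases hcomp with h | h
  · have := hm h
    rw [hx1, hx2, e.apply_symm_apply, e.apply_symm_apply] at this
    have hll : y1 l ≤ y2 l := this l
    rw [hy1, hy2] at hll
    simp only [Function.update_self, Function.update_of_ne (Ne.symm hj)] at hll
    exact absurd hll (not_le.mpr hlgt)
  · have := hm h
    rw [hx1, hx2, e.apply_symm_apply, e.apply_symm_apply] at this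
    have hjj : y2 j ≤ y1 j := this j
    rw [hy1, hy2] at hjj
    simp only [Function.update_self, Function.update_of_ne hj] at hjj
    exact absurd hjj (not_le.mpr hjgt)


/-- dual: image of an edge point at the top corner -/
lemma edge_high (k : Fin n) (W : ↥(cube a b)) (hWk : (W : Fin n → ℝ) k < b k)
    (hW : ∀ j ≠ k, (W : Fin n → ℝ) j = b j) :
    ∃ l, (e W : Fin n → ℝ) l < d l ∧ ∀ j ≠ l, (e W : Fin n → ℝ) j = d j := by
  have hne : (e W : Fin n → ℝ) ≠ d := by
    intro h
    have : e W = e ⟨b, mem_high hab⟩ := by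
      rw [Subtype.ext_iff, h, map_top hab hcd e hm hm']
    have := e.injective this
    rw [Subtype.ext_iff] at this
    exact absurd (congrFun this k) (ne_of_lt hWk)
  have hge : ∀ i, (e W : Fin n → ℝ) i ≤ d i := fun i => ((e W).2 i).2
  obtain ⟨l, hl⟩ := Function.ne_iff.mp hne
  have hlgt : (e W : Fin n → ℝ) l < d l := lt_of_le_of_ne (hge l) hl
  refine ⟨l, hlgt, fun j hj => ?_⟩
  by_contra hjne
  have hjgt : (e W : Fin n → ℝ) j < d j := lt_of_le_of_ne (hge j) hjne
  set y1 : Fin n → ℝ := Function.update d l ((e W : Fin n → ℝ) l) with hy1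
  set y2 : Fin n → ℝ := Function.update d j ((e W : Fin n → ℝ) j) with hy2
  have hy1m : y1 ∈ cube c d := mem_upd' hcd l ⟨((e W).2 l).1, hge l⟩
  have hy2m : y2 ∈ cube c d := mem_upd' hcd j ⟨((e W).2 j).1, hge j⟩
  have hy1le : e W ≤ (⟨y1, hy1m⟩ : ↥(cube c d)) := by
    intro i
    rcases eq_or_ne i l with rfl | h
    · simp [hy1]
    · simpa [hy1, Function.update_of_ne h] using hge i
  have hy2le : e W ≤ (⟨y2, hy2m⟩ : ↥(cube c d)) := by
    intro i
    rcases eq_or_ne i j with rfl | h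
    · simp [hy2]
    · simpa [hy2, Function.update_of_ne h] using hge i
  set x1 := e.symm ⟨y1, hy1m⟩ with hx1
  set x2 := e.symm ⟨y2, hy2m⟩ with hx2
  have hx1le : W ≤ x1 := by have := hm' hy1le; rwa [e.symm_apply_apply] at this
  have hx2le : W ≤ x2 := by have := hm' hy2le; rwa [e.symm_apply_apply] at this
  have hx1c : ∀ i ≠ k, (x1 : Fin n → ℝ) i = b i :=
    fun i hi => le_antisymm ((x1.2 i).2) (by simpa [hW i hi] using hx1le i)
  have hx2c : ∀ i ≠ k, (x2 : Fin n → ℝ) i = b i :=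
    fun i hi => le_antisymm ((x2.2 i).2) (by simpa [hW i hi] using hx2le i)
  have hcomp : x1 ≤ x2 ∨ x2 ≤ x1 := by
    rcases le_total ((x1 : Fin n → ℝ) k) ((x2 : Fin n → ℝ) k) with h | h
    · left; intro i
      rcases eq_or_ne i k with rfl | hi
      · exact h
      · rw [hx1c i hi, hx2c i hi]
    · right; intro i
      rcases eq_or_ne i k with rfl | hi
      · exact h
      · rw [hx1c i hi, hx2c i hi]
  rcases hcomp with h | h
  · have := hm h
    rw [hx1, hx2, e.apply_symm_apply, e.apply_symm_apply] at this
    have hjj : y1 j ≤ y2 j := this j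
    rw [hy1, hy2] at hjj
    simp only [Function.update_self, Function.update_of_ne hj] at hjj
    exact absurd hjj (not_le.mpr hjgt)
  · have := hm h
    rw [hx1, hx2, e.apply_symm_apply, e.apply_symm_apply] at this
    have hll : y2 l ≤ y1 l := this l
    rw [hy1, hy2] at hll
    simp only [Function.update_self, Function.update_of_ne (Ne.symm hj)] at hll
    exact absurd hll (not_le.mpr hlgt)

/-- if an edge from the bottom corner in direction k maps onto edge l, the lower face k
maps into the lower face l -/
lemma lower_forward (k l : Fin n) (W : ↥(cube a b))
    (hW : ∀ j ≠ k, (W : Fin n → ℝ) j = a j)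
    (hZl : c l < (e W : Fin n → ℝ) l) (hZ : ∀ j ≠ l, (e W : Fin n → ℝ) j = c j)
    (x : ↥(cube a b)) (hx : (x : Fin n → ℝ) k = a k) :
    (e x : Fin n → ℝ) l = c l := by
  have hexl : c l ≤ (e x : Fin n → ℝ) l := ((e x).2 l).1
  have htm : min ((e x : Fin n → ℝ) l) ((e W : Fin n → ℝ) l) ∈ Set.Icc (c l) (d l) :=
    ⟨le_min hexl ((e W).2 l).1, le_trans (min_le_left _ _) ((e x).2 l).2⟩
  set y0 : Fin n → ℝ := Function.update c l (min ((e x : Fin n → ℝ) l) ((e W : Fin n → ℝ) l))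
    with hy0
  have hy0m : y0 ∈ cube c d := mem_upd hcd l htm
  have hle1 : (⟨y0, hy0m⟩ : ↥(cube c d)) ≤ e x := by
    intro i
    rcases eq_or_ne i l with rfl | h
    · simp only [hy0, Function.update_self]
      exact min_le_left _ _
    · simp only [hy0, Function.update_of_ne h]
      exact ((e x).2 i).1
  have hle2 : (⟨y0, hy0m⟩ : ↥(cube c d)) ≤ e W := by
    intro i
    rcases eq_or_ne i l with rfl | h
    · simp only [hy0, Function.update_self]
      exact min_le_right _ _
    · simp only [hy0, Function.update_of_ne h]
      exact (hZ i h).ge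
  set X0 := e.symm ⟨y0, hy0m⟩ with hX0
  have hX1 : X0 ≤ x := by have := hm' hle1; rwa [e.symm_apply_apply] at this
  have hX2 : X0 ≤ W := by have := hm' hle2; rwa [e.symm_apply_apply] at this
  have hX0a : X0 = ⟨a, mem_low hab⟩ := by
    apply Subtype.ext
    funext i
    rcases eq_or_ne i k with rfl | hi
    · exact le_antisymm (by simpa [hx] using hX1 i) ((X0.2 i).1)
    · exact le_antisymm (by simpa [hW i hi] using hX2 i) ((X0.2 i).1)
  have h1 : (⟨y0, hy0m⟩ : ↥(cube c d)) = e ⟨a, mem_low hab⟩ := by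
    rw [← hX0a, hX0, e.apply_symm_apply]
  have hyc : y0 = c := by
    have h2 : ((⟨y0, hy0m⟩ : ↥(cube c d)) : Fin n → ℝ) = ((e ⟨a, mem_low hab⟩ : ↥(cube c d)) : Fin n → ℝ) :=
      congrArg _ h1
    exact h2.trans (map_bot hab hcd e hm hm')
  have htc : min ((e x : Fin n → ℝ) l) ((e W : Fin n → ℝ) l) = c l := by
    have := congrFun hyc l
    rwa [hy0, Function.update_self] at this
  rcases le_total ((e x : Fin n → ℝ) l) ((e W : Fin n → ℝ) l) with h1 | h1
  · rw [min_eq_left h1] at htc; exact htc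
  · rw [min_eq_right h1] at htc; exact absurd htc (ne_of_gt hZl)

/-- dual for the upper face -/
lemma upper_forward (k l : Fin n) (W : ↥(cube a b))
    (hW : ∀ j ≠ k, (W : Fin n → ℝ) j = b j)
    (hZl : (e W : Fin n → ℝ) l < d l) (hZ : ∀ j ≠ l, (e W : Fin n → ℝ) j = d j)
    (x : ↥(cube a b)) (hx : (x : Fin n → ℝ) k = b k) :
    (e x : Fin n → ℝ) l = d l := by
  have hexl : (e x : Fin n → ℝ) l ≤ d l := ((e x).2 l).2
  have htm : max ((e x : Fin n → ℝ) l) ((e W : Fin n → ℝ) l) ∈ Set.Icc (c l) (d l) :=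
    ⟨le_trans ((e x).2 l).1 (le_max_left _ _), max_le hexl ((e W).2 l).2⟩
  set y0 : Fin n → ℝ := Function.update d l (max ((e x : Fin n → ℝ) l) ((e W : Fin n → ℝ) l))
    with hy0
  have hy0m : y0 ∈ cube c d := mem_upd' hcd l htm
  have hle1 : e x ≤ (⟨y0, hy0m⟩ : ↥(cube c d)) := by
    intro i
    rcases eq_or_ne i l with rfl | h
    · simp only [hy0, Function.update_self]
      exact le_max_left _ _
    · simp only [hy0, Function.update_of_ne h]
      exact ((e x).2 i).2
  have hle2 : e W ≤ (⟨y0, hy0m⟩ : ↥(cube c d)) := by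
    intro i
    rcases eq_or_ne i l with rfl | h
    · simp only [hy0, Function.update_self]
      exact le_max_right _ _
    · simp only [hy0, Function.update_of_ne h]
      exact (hZ i h).le
  set X0 := e.symm ⟨y0, hy0m⟩ with hX0
  have hX1 : x ≤ X0 := by have := hm' hle1; rwa [e.symm_apply_apply] at this
  have hX2 : W ≤ X0 := by have := hm' hle2; rwa [e.symm_apply_apply] at this
  have hX0b : X0 = ⟨b, mem_high hab⟩ := by
    apply Subtype.ext
    funext i
    rcases eq_or_ne i k with rfl | hi
    · exact le_antisymm ((X0.2 i).2) (by simpa [hx] using hX1 i)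
    · exact le_antisymm ((X0.2 i).2) (by simpa [hW i hi] using hX2 i)
  have h1 : (⟨y0, hy0m⟩ : ↥(cube c d)) = e ⟨b, mem_high hab⟩ := by
    rw [← hX0b, hX0, e.apply_symm_apply]
  have hyd : y0 = d := by
    have h2 : ((⟨y0, hy0m⟩ : ↥(cube c d)) : Fin n → ℝ) = ((e ⟨b, mem_high hab⟩ : ↥(cube c d)) : Fin n → ℝ) :=
      congrArg _ h1
    exact h2.trans (map_top hab hcd e hm hm')
  have htd : max ((e x : Fin n → ℝ) l) ((e W : Fin n → ℝ) l) = d l := by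
    have := congrFun hyd l
    rwa [hy0, Function.update_self] at this
  rcases le_total ((e W : Fin n → ℝ) l) ((e x : Fin n → ℝ) l) with h1 | h1
  · rw [max_eq_left h1] at htd; exact htd
  · rw [max_eq_right h1] at htd; exact absurd htd (ne_of_lt hZl)

/-- the lower edge index and the upper edge index agree -/
lemma edges_match (k l m : Fin n)
    (P : ↥(cube a b)) (hPk : (P : Fin n → ℝ) k = b k) (hP : ∀ j ≠ k, (P : Fin n → ℝ) j = a j)
    (M : ↥(cube a b)) (hMk : (M : Fin n → ℝ) k = a k) (hM : ∀ j ≠ k, (M : Fin n → ℝ) j = b j)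
    (hQl : c l < (e P : Fin n → ℝ) l) (hQ : ∀ j ≠ l, (e P : Fin n → ℝ) j = c j)
    (hRm : (e M : Fin n → ℝ) m < d m) (hR : ∀ j ≠ m, (e M : Fin n → ℝ) j = d j) :
    l = m := by
  by_contra h
  set y : Fin n → ℝ := Function.update d m ((e M : Fin n → ℝ) m) with hy
  have hym : y ∈ cube c d := mem_upd' hcd m ⟨((e M).2 m).1, hRm.le⟩
  have h1 : e P ≤ (⟨y, hym⟩ : ↥(cube c d)) := by
    intro i
    rcases eq_or_ne i m with rfl | hi
    · simp only [hy, Function.update_self]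
      rw [hQ i (Ne.symm h)]
      exact ((e M).2 i).1
    · simp only [hy, Function.update_of_ne hi]
      exact ((e P).2 i).2
  have h2 : e M ≤ (⟨y, hym⟩ : ↥(cube c d)) := by
    intro i
    rcases eq_or_ne i m with rfl | hi
    · simp only [hy, Function.update_self]; exact le_rfl
    · simp only [hy, Function.update_of_ne hi]
      exact (hR i hi).le
  have hP' : P ≤ e.symm ⟨y, hym⟩ := by have := hm' h1; rwa [e.symm_apply_apply] at this
  have hM' : M ≤ e.symm ⟨y, hym⟩ := by have := hm' h2; rwa [e.symm_apply_apply] at this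
  have hB : e.symm ⟨y, hym⟩ = ⟨b, mem_high hab⟩ := by
    apply Subtype.ext
    funext i
    rcases eq_or_ne i k with rfl | hi
    · exact le_antisymm (((e.symm ⟨y, hym⟩).2 i).2) (by simpa [hPk] using hP' i)
    · exact le_antisymm (((e.symm ⟨y, hym⟩).2 i).2) (by simpa [hM i hi] using hM' i)
  have heq : (⟨y, hym⟩ : ↥(cube c d)) = e ⟨b, mem_high hab⟩ := by
    rw [← hB, e.apply_symm_apply]
  have hyd : y = d := by
    have h2 : ((⟨y, hym⟩ : ↥(cube c d)) : Fin n → ℝ) = ((e ⟨b, mem_high hab⟩ : ↥(cube c d)) : Fin n → ℝ) :=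
      congrArg _ heq
    exact h2.trans (map_top hab hcd e hm hm')
  have := congrFun hyd m
  rw [hy, Function.update_self] at this
  exact absurd this (ne_of_lt hRm)

end

end FaceAux


/-- A dihomeomorphism between hyperrectangles maps, for every index `k`, the lower face
`{x | x k = a k}` onto a lower face `{y | y l = c l}` and the corresponding upper face
`{x | x k = b k}` onto the corresponding upper face `{y | y l = d l}`, for one and the
same index `l`. -/
theorem face_image_dihomeo {n : ℕ} (hn : 1 ≤ n) (a b c d : Fin n → ℝ)
    (hab : ∀ i, a i < b i) (hcd : ∀ i, c i < d i)
    (φ : ↥{x : Fin n → ℝ | ∀ i, x i ∈ Set.Icc (a i) (b i)} ≃ₜ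
         ↥{y : Fin n → ℝ | ∀ i, y i ∈ Set.Icc (c i) (d i)})
    (hmono : Monotone φ) (hmono' : Monotone φ.symm) (k : Fin n) :
    ∃ l : Fin n,
      ((fun x : ↥{x : Fin n → ℝ | ∀ i, x i ∈ Set.Icc (a i) (b i)} => (φ x : Fin n → ℝ)) ''
          {x | (x : Fin n → ℝ) k = a k} =
        {y : Fin n → ℝ | (∀ i, y i ∈ Set.Icc (c i) (d i)) ∧ y l = c l}) ∧
      ((fun x : ↥{x : Fin n → ℝ | ∀ i, x i ∈ Set.Icc (a i) (b i)} => (φ x : Fin n → ℝ)) ''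
          {x | (x : Fin n → ℝ) k = b k} =
        {y : Fin n → ℝ | (∀ i, y i ∈ Set.Icc (c i) (d i)) ∧ y l = d l}) := by
  classical
  set e : ↥(FaceAux.cube a b) ≃ ↥(FaceAux.cube c d) := φ.toEquiv with he
  have hm : Monotone e := hmono
  have hm' : Monotone e.symm := hmono'
  have hm2 : Monotone e.symm.symm := by rw [Equiv.symm_symm]; exact hm
  -- the two edge points in the source cube
  set P : ↥(FaceAux.cube a b) :=
    ⟨Function.update a k (b k), FaceAux.mem_upd hab k ⟨(hab k).le, le_rfl⟩⟩ with hP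
  set M : ↥(FaceAux.cube a b) :=
    ⟨Function.update b k (a k), FaceAux.mem_upd' hab k ⟨le_rfl, (hab k).le⟩⟩ with hM
  have hPk : (P : Fin n → ℝ) k = b k := by simp [hP]
  have hPj : ∀ j ≠ k, (P : Fin n → ℝ) j = a j := fun j hj => by
    simp [hP, Function.update_of_ne hj]
  have hMk : (M : Fin n → ℝ) k = a k := by simp [hM]
  have hMj : ∀ j ≠ k, (M : Fin n → ℝ) j = b j := fun j hj => by
    simp [hM, Function.update_of_ne hj]
  obtain ⟨l, hQl, hQ⟩ := FaceAux.edge_low hab hcd e hm hm' k P (hPk ▸ hab k) hPj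
  obtain ⟨m, hRm, hR⟩ := FaceAux.edge_high hab hcd e hm hm' k M (hMk ▸ hab k) hMj
  have hlm : l = m :=
    FaceAux.edges_match hab hcd e hm hm' k l m P hPk hPj M hMk hMj hQl hQ hRm hR
  subst hlm
  -- the opposite edge points in the target cube
  set P' : ↥(FaceAux.cube c d) :=
    ⟨Function.update c l (d l), FaceAux.mem_upd hcd l ⟨(hcd l).le, le_rfl⟩⟩ with hP'
  set M' : ↥(FaceAux.cube c d) :=
    ⟨Function.update d l (c l), FaceAux.mem_upd' hcd l ⟨le_rfl, (hcd l).le⟩⟩ with hM'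
  have hP'l : (P' : Fin n → ℝ) l = d l := by simp [hP']
  have hP'j : ∀ j ≠ l, (P' : Fin n → ℝ) j = c j := fun j hj => by
    simp [hP', Function.update_of_ne hj]
  have hM'l : (M' : Fin n → ℝ) l = c l := by simp [hM']
  have hM'j : ∀ j ≠ l, (M' : Fin n → ℝ) j = d j := fun j hj => by
    simp [hM', Function.update_of_ne hj]
  -- image of P' under e.symm sits on the edge k from a
  obtain ⟨k', hZ'k', hZ'⟩ :=
    FaceAux.edge_low hcd hab e.symm hm' hm2 l P' (hP'l ▸ hcd l) hP'j
  have hQleP' : e P ≤ P' := by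
    intro i
    rcases eq_or_ne i l with rfl | hi
    · rw [hP'l]; exact ((e P).2 i).2
    · rw [hP'j i hi, hQ i hi]
  have hPle : P ≤ e.symm P' := by
    have := hm' hQleP'
    rwa [e.symm_apply_apply] at this
  have hk'k : k' = k := by
    by_contra hne
    have h1 : (e.symm P' : Fin n → ℝ) k = a k := hZ' k (fun h => hne (h ▸ rfl))
    have h2 : b k ≤ (e.symm P' : Fin n → ℝ) k := hPk ▸ hPle k
    rw [h1] at h2
    exact absurd h2 (not_le.mpr (hab k))
  rw [hk'k] at hZ'k' hZ'
  -- image of M' under e.symm sits on the co-edge k from b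
  obtain ⟨k'', hZ''k'', hZ''⟩ :=
    FaceAux.edge_high hcd hab e.symm hm' hm2 l M' (hM'l ▸ hcd l) hM'j
  have hM'leR : M' ≤ e M := by
    intro i
    rcases eq_or_ne i l with rfl | hi
    · rw [hM'l]; exact ((e M).2 i).1
    · rw [hM'j i hi, hR i hi]
  have hMle : e.symm M' ≤ M := by
    have := hm' hM'leR
    rwa [e.symm_apply_apply] at this
  have hk''k : k'' = k := by
    by_contra hne
    have h1 : (e.symm M' : Fin n → ℝ) k = b k := hZ'' k (fun h => hne (h ▸ rfl))
    have h2 : (e.symm M' : Fin n → ℝ) k ≤ a k := hMk ▸ hMle k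
    rw [h1] at h2
    exact absurd h2 (not_le.mpr (hab k))
  rw [hk''k] at hZ''k'' hZ''
  refine ⟨l, ?_, ?_⟩
  · ext y
    simp only [Set.mem_image, Set.mem_setOf_eq]
    constructor
    · rintro ⟨x, hx, rfl⟩
      exact ⟨(e x).2, FaceAux.lower_forward hab hcd e hm hm' k l P hPj hQl hQ x hx⟩
    · rintro ⟨hyT, hyl⟩
      refine ⟨e.symm ⟨y, hyT⟩, ?_, ?_⟩
      · exact FaceAux.lower_forward hcd hab e.symm hm' hm2 l k P' hP'j hZ'k' hZ'
          ⟨y, hyT⟩ hyl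
      · have : e (e.symm ⟨y, hyT⟩) = ⟨y, hyT⟩ := e.apply_symm_apply _
        exact congrArg Subtype.val this
  · ext y
    simp only [Set.mem_image, Set.mem_setOf_eq]
    constructor
    · rintro ⟨x, hx, rfl⟩
      exact ⟨(e x).2, FaceAux.upper_forward hab hcd e hm hm' k l M hMj hRm hR x hx⟩
    · rintro ⟨hyT, hyl⟩
      refine ⟨e.symm ⟨y, hyT⟩, ?_, ?_⟩
      · exact FaceAux.upper_forward hcd hab e.symm hm' hm2 l k M' hM'j hZ''k'' hZ''
          ⟨y, hyT⟩ hyl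
      · have : e (e.symm ⟨y, hyT⟩) = ⟨y, hyT⟩ := e.apply_symm_apply _
        exact congrArg Subtype.val this
end
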